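/- arXiv:2406.00832 — 5 statements merged into one kernel-verified Lean document; each statement's English description precedes it below -/
import Mathlib

section
/- The function d(c) = ((c−1)e^c+1)/(e^c−1) − log((e^c−1)/c) is strictly increasing on (0,∞), with d(c) → 0 as c → 0⁺ and d(c) → ∞ as c → ∞. -/
open Real Filter

private lemma key_ineq {c : ℝ} (hc : 0 < c) : c ^ 2 * Real.exp c < (Real.exp c - 1) ^ 2 := by
  have h2 : 0 < c / 2 := by linarith
  have hs : c / 2 < Real.sinh (c / 2) := Real.self_lt_sinh_iff.mpr h2
  have hsinh : Real.sinh (c / 2) = (Real.exp (c / 2) - Real.exp (-(c / 2))) / 2 := Real.sinh_eq _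
  have hkey : c * Real.exp (c / 2) < Real.exp c - 1 := by
    have h1 : c < Real.exp (c / 2) - Real.exp (-(c / 2)) := by
      rw [hsinh] at hs; linarith
    have hme : (0:ℝ) < Real.exp (c / 2) := Real.exp_pos _
    have := mul_lt_mul_of_pos_right h1 hme
    have hexp : Real.exp (-(c/2)) * Real.exp (c/2) = 1 := by
      rw [← Real.exp_add]; norm_num
    have hexp2 : Real.exp (c/2) * Real.exp (c/2) = Real.exp c := by
      rw [← Real.exp_add]; ring_nf
    nlinarith
  have hpos : 0 < c * Real.exp (c / 2) := mul_pos hc (Real.exp_pos _)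
  have hexp2 : Real.exp (c/2) * Real.exp (c/2) = Real.exp c := by
    rw [← Real.exp_add]; ring_nf
  nlinarith

private lemma hasDeriv_f {c : ℝ} (hc : 0 < c) :
    HasDerivAt (fun c : ℝ => ((c - 1) * Real.exp c + 1) / (Real.exp c - 1)
          - Real.log ((Real.exp c - 1) / c))
      (((Real.exp c - 1) ^ 2 - c ^ 2 * Real.exp c) / (c * (Real.exp c - 1) ^ 2)) c := by
  have hD : 0 < Real.exp c - 1 := by
    have := Real.exp_lt_exp.mpr hc; rw [Real.exp_zero] at this; linarith
  have h1 : HasDerivAt (fun c : ℝ => (c - 1) * Real.exp c + 1) (c * Real.exp c) c := by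
    have := (((hasDerivAt_id c).sub_const 1).mul (Real.hasDerivAt_exp c)).add_const 1
    refine this.congr_deriv ?_; simp only [id_eq]; ring
  have h2 : HasDerivAt (fun c : ℝ => Real.exp c - 1) (Real.exp c) c :=
    (Real.hasDerivAt_exp c).sub_const 1
  have hq := h1.div h2 hD.ne'
  have h3 : HasDerivAt (fun c : ℝ => (Real.exp c - 1) / c)
      ((Real.exp c * c - (Real.exp c - 1) * 1) / c ^ 2) c :=
    h2.div (hasDerivAt_id c) hc.ne'
  have hlog := h3.log (div_ne_zero hD.ne' hc.ne')
  have := hq.sub hlog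
  refine this.congr_deriv ?_
  field_simp
  ring

/-- The KL function `d(c) = ((c−1)e^c+1)/(e^c−1) − log((e^c−1)/c)` is strictly
increasing on `(0,∞)`, with `d(c) → 0` as `c → 0⁺` and `d(c) → ∞` as `c → ∞`. -/
theorem klDiv_exp_tilt_strictMono_limits :
    StrictMonoOn
        (fun c : ℝ => ((c - 1) * Real.exp c + 1) / (Real.exp c - 1)
          - Real.log ((Real.exp c - 1) / c)) (Set.Ioi (0:ℝ)) ∧
      Tendsto (fun c : ℝ => ((c - 1) * Real.exp c + 1) / (Real.exp c - 1)
          - Real.log ((Real.exp c - 1) / c))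
        (nhdsWithin 0 (Set.Ioi 0)) (nhds 0) ∧
      Tendsto (fun c : ℝ => ((c - 1) * Real.exp c + 1) / (Real.exp c - 1)
          - Real.log ((Real.exp c - 1) / c)) atTop atTop := by
  refine ⟨?_, ?_, ?_⟩
  · -- strict mono
    apply strictMonoOn_of_deriv_pos (convex_Ioi 0)
    · exact fun x hx => ((hasDeriv_f hx).continuousAt.continuousWithinAt)
    · intro x hx
      rw [interior_Ioi] at hx
      rw [(hasDeriv_f hx).deriv]
      have hD : 0 < Real.exp x - 1 := by
        have := Real.exp_lt_exp.mpr hx; rw [Real.exp_zero] at this; linarith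
      exact div_pos (sub_pos.mpr (key_ineq hx)) (mul_pos hx (pow_pos hD 2))
  · -- limit at 0+
    have hh : Tendsto (fun c : ℝ => (Real.exp c - 1) / c) (nhdsWithin 0 (Set.Ioi 0)) (nhds 1) := by
      have := (Real.hasDerivAt_exp 0).tendsto_slope_zero_right
      simp only [Real.exp_zero] at this
      exact this.congr fun c => by simp [smul_eq_mul, inv_mul_eq_div]
    have hexp : Tendsto (fun c : ℝ => Real.exp c) (nhdsWithin 0 (Set.Ioi 0)) (nhds 1) := by
      have : Tendsto (fun c : ℝ => Real.exp c) (nhds 0) (nhds 1) := by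
        simpa [Real.exp_zero] using Real.continuous_exp.tendsto 0
      exact this.mono_left nhdsWithin_le_nhds
    have hlog : Tendsto (fun c : ℝ => Real.log ((Real.exp c - 1) / c))
        (nhdsWithin 0 (Set.Ioi 0)) (nhds 0) := by
      have := (Real.continuousAt_log one_ne_zero).tendsto.comp hh
      simpa [Function.comp_def] using this
    have hmain : Tendsto (fun c : ℝ => Real.exp c / ((Real.exp c - 1) / c) - 1
        - Real.log ((Real.exp c - 1) / c)) (nhdsWithin 0 (Set.Ioi 0)) (nhds 0) := by
      have h := ((hexp.div hh one_ne_zero).sub_const 1).sub hlog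
      simpa using h
    apply hmain.congr'
    filter_upwards [self_mem_nhdsWithin] with c hc
    have hc' : (0:ℝ) < c := hc
    have hD : 0 < Real.exp c - 1 := by
      have := Real.exp_lt_exp.mpr hc'; rw [Real.exp_zero] at this; linarith
    have : Real.exp c / ((Real.exp c - 1) / c) - 1 = ((c - 1) * Real.exp c + 1) / (Real.exp c - 1) := by
      field_simp
      ring
    rw [this]
  · -- limit at infinity
    have hlb : Tendsto (fun c : ℝ => Real.log c - 1) atTop atTop :=
      Real.tendsto_log_atTop.atTop_add tendsto_const_nhds
    apply tendsto_atTop_mono' atTop _ hlb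
    filter_upwards [eventually_ge_atTop (1:ℝ)] with c hc
    have hc' : (0:ℝ) < c := by linarith
    have hD : 0 < Real.exp c - 1 := by
      have := Real.exp_lt_exp.mpr hc'; rw [Real.exp_zero] at this; linarith
    have hA : c - 1 ≤ ((c - 1) * Real.exp c + 1) / (Real.exp c - 1) := by
      rw [le_div_iff₀ hD]
      nlinarith
    have hB : Real.log ((Real.exp c - 1) / c) ≤ c - Real.log c := by
      have h1 : (Real.exp c - 1) / c ≤ Real.exp c / c := by
        gcongr
        linarith
      have h2 : Real.log ((Real.exp c - 1) / c) ≤ Real.log (Real.exp c / c) :=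
        Real.log_le_log (div_pos hD hc') h1
      rw [Real.log_div (Real.exp_ne_zero c) hc'.ne', Real.log_exp] at h2
      exact h2
    linarith
end

section
/- Let f : [0,1] → ℝ be nonnegative, nondecreasing, with F(t) = ∫₀^t f(u) du and F(1) − F(0) > 0. Let p₁,...,p_L > 0 sum to 1 with partial sums P_i (P_0 = 0). Then ∑_{i=1}^{L} ((F(P_i)−F(P_{i−1}))/(F(1)−F(0))) · log((F(P_i)−F(P_{i−1}))/(p_i (F(1)−F(0)))) ≤ (∫₀¹ f(u) log f(u) du)/(F(1)−F(0)) − log(F(1)−F(0)). -/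
open MeasureTheory Set intervalIntegral

lemma jensen_mul_log (f : ℝ → ℝ) (a b : ℝ) (hab : a < b)
    (hnn : ∀ x ∈ Set.Ioc a b, 0 ≤ f x)
    (hfi : IntegrableOn f (Set.Ioc a b))
    (hgi : IntegrableOn (fun x => f x * Real.log (f x)) (Set.Ioc a b)) :
    (∫ u in a..b, f u) * Real.log ((∫ u in a..b, f u) / (b - a)) ≤
      ∫ u in a..b, f u * Real.log (f u) := by
  set μ := volume.restrict (Set.Ioc a b) with hμ
  have hbapos : (0:ℝ) < b - a := sub_pos.2 hab
  have huniv : μ Set.univ = ENNReal.ofReal (b - a) := by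
    rw [hμ, Measure.restrict_apply_univ, Real.volume_Ioc]
  haveI : IsFiniteMeasure μ := ⟨by rw [huniv]; exact ENNReal.ofReal_lt_top⟩
  haveI : NeZero μ := ⟨by
    intro h
    have := huniv
    rw [h] at this
    simp only [Measure.coe_zero, Pi.zero_apply] at this
    rw [eq_comm, ENNReal.ofReal_eq_zero] at this
    linarith⟩
  have hconv := (Real.convexOn_mul_log).map_average_le
    (Real.continuous_mul_log.continuousOn) isClosed_Ici
    (μ := μ) (f := f)
    ((ae_restrict_iff' measurableSet_Ioc).2 (Filter.Eventually.of_forall hnn))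
    hfi hgi
  have htoReal : (μ Set.univ).toReal = b - a := by
    rw [huniv, ENNReal.toReal_ofReal hbapos.le]
  rw [average_eq, average_eq, measureReal_def, htoReal, smul_eq_mul, smul_eq_mul] at hconv
  have hI : ∫ x, f x ∂μ = ∫ u in a..b, f u :=
    (intervalIntegral.integral_of_le hab.le).symm
  have hI2 : ∫ x, f x * Real.log (f x) ∂μ = ∫ u in a..b, f u * Real.log (f u) :=
    (intervalIntegral.integral_of_le hab.le).symm
  rw [hI] at hconv
  have := mul_le_mul_of_nonneg_left hconv hbapos.le
  rw [← hI2]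
  calc (∫ u in a..b, f u) * Real.log ((∫ u in a..b, f u) / (b - a))
      = (b-a) * (((b - a)⁻¹ * ∫ u in a..b, f u) * Real.log ((b - a)⁻¹ * ∫ u in a..b, f u)) := by
        rw [div_eq_inv_mul]; field_simp
    _ ≤ (b-a) * ((b - a)⁻¹ * ∫ x, f x * Real.log (f x) ∂μ) := this
    _ = ∫ x, f x * Real.log (f x) ∂μ := by field_simp

/-- Discrete KL of the reward-aligned policy is bounded by the continuous KL.
Here `F t = ∫₀^t f`, `P_i = ∑_{j<i} p_j`. -/
theorem discrete_kl_le_continuous_kl (L : ℕ) (f : ℝ → ℝ)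
    (hf0 : ∀ u ∈ Set.Icc (0:ℝ) 1, 0 ≤ f u)
    (hmono : MonotoneOn f (Set.Icc (0:ℝ) 1))
    (F : ℝ → ℝ) (hF : ∀ t, F t = ∫ u in (0:ℝ)..t, f u)
    (hFpos : 0 < F 1 - F 0)
    (p : ℕ → ℝ) (hpos : ∀ i ∈ Finset.range L, 0 < p i)
    (hsum : ∑ i ∈ Finset.range L, p i = 1)
    (P : ℕ → ℝ) (hP : ∀ i, P i = ∑ j ∈ Finset.range i, p j) :
    ∑ i ∈ Finset.range L,
        ((F (P (i + 1)) - F (P i)) / (F 1 - F 0)) *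
          Real.log ((F (P (i + 1)) - F (P i)) / (p i * (F 1 - F 0))) ≤
      (∫ u in (0:ℝ)..1, f u * Real.log (f u)) / (F 1 - F 0)
        - Real.log (F 1 - F 0) := by
  set Z := F 1 - F 0 with hZ
  -- basic facts about P
  have hP0 : P 0 = 0 := by simp [hP]
  have hPL : P L = 1 := by rw [hP]; exact hsum
  have hPmono : ∀ i j, i ≤ j → j ≤ L → P i ≤ P j := by
    intro i j hij hjL
    rw [hP, hP]
    refine Finset.sum_le_sum_of_subset_of_nonneg
      (Finset.range_subset_range.2 hij) ?_
    intro k hk _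
    exact (hpos k (Finset.mem_range.2 ((Finset.mem_range.1 hk).trans_le hjL))).le
  have hPIcc : ∀ i, i ≤ L → P i ∈ Set.Icc (0:ℝ) 1 := by
    intro i hi
    constructor
    · rw [← hP0]; exact hPmono 0 i (Nat.zero_le _) hi
    · rw [← hPL]; exact hPmono i L hi le_rfl
  have hPstep : ∀ i, P (i+1) - P i = p i := by
    intro i; rw [hP, hP, Finset.sum_range_succ]; ring
  -- integrability of f and f log f on subintervals of [0,1]
  have hfI : ∀ a b : ℝ, a ∈ Set.Icc (0:ℝ) 1 → b ∈ Set.Icc (0:ℝ) 1 →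
      IntervalIntegrable f volume a b := by
    intro a b ha hb
    exact MonotoneOn.intervalIntegrable (hmono.mono (Set.uIcc_subset_Icc ha hb))
  have hgcont : Continuous (fun x : ℝ => x * Real.log x) := Real.continuous_mul_log
  have hgI : ∀ a b : ℝ, a ∈ Set.Icc (0:ℝ) 1 → b ∈ Set.Icc (0:ℝ) 1 → a ≤ b →
      IntegrableOn (fun x => f x * Real.log (f x)) (Set.Ioc a b) := by
    intro a b ha hb hab
    have hmeas : AEMeasurable f (volume.restrict (Set.Ioc a b)) := by
      refine aemeasurable_restrict_of_monotoneOn measurableSet_Ioc ?_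
      exact hmono.mono (fun x hx => ⟨ha.1.trans hx.1.le, hx.2.trans hb.2⟩)
    obtain ⟨C, hC⟩ := (isCompact_Icc (a := (0:ℝ)) (b := f 1)).exists_bound_of_continuousOn
      hgcont.continuousOn
    refine Integrable.mono' (integrable_const C) ?_ ?_
    · exact (hgcont.measurable.comp_aemeasurable hmeas).aestronglyMeasurable
    · refine (ae_restrict_iff' measurableSet_Ioc).2 (Filter.Eventually.of_forall ?_)
      intro x hx
      have hxIcc : x ∈ Set.Icc (0:ℝ) 1 := ⟨ha.1.trans hx.1.le, hx.2.trans hb.2⟩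
      have h1 : f x ∈ Set.Icc (0:ℝ) (f 1) :=
        ⟨hf0 x hxIcc, hmono hxIcc (Set.right_mem_Icc.2 zero_le_one) hxIcc.2⟩
      exact hC (f x) h1
  -- a_i as an interval integral
  have hFdiff : ∀ a b : ℝ, a ∈ Set.Icc (0:ℝ) 1 → b ∈ Set.Icc (0:ℝ) 1 →
      F b - F a = ∫ u in a..b, f u := by
    intro a b ha hb
    rw [hF, hF]
    rw [← intervalIntegral.integral_interval_sub_left
      (hfI 0 b (Set.left_mem_Icc.2 zero_le_one) hb)
      (hfI 0 a (Set.left_mem_Icc.2 zero_le_one) ha)]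
  have hai : ∀ i ∈ Finset.range L,
      F (P (i+1)) - F (P i) = ∫ u in (P i)..(P (i+1)), f u := by
    intro i hi
    have hiL := Finset.mem_range.1 hi
    exact hFdiff _ _ (hPIcc i hiL.le) (hPIcc (i+1) hiL)
  have hZ1 : Z = ∫ u in (0:ℝ)..1, f u := by
    rw [hZ, hFdiff 0 1 (Set.left_mem_Icc.2 zero_le_one) (Set.right_mem_Icc.2 zero_le_one)]
  -- nonnegativity of a_i
  have hanon : ∀ i ∈ Finset.range L, 0 ≤ F (P (i+1)) - F (P i) := by
    intro i hi
    have hiL := Finset.mem_range.1 hi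
    rw [hai i hi]
    refine intervalIntegral.integral_nonneg (hPmono i (i+1) (Nat.le_succ _) hiL) ?_
    intro u hu
    exact hf0 u ⟨(hPIcc i hiL.le).1.trans hu.1, hu.2.trans (hPIcc (i+1) hiL).2⟩
  -- Step A+B: sum of a_i log(a_i/p_i) ≤ ∫₀¹ f log f
  have key : ∑ i ∈ Finset.range L,
      (F (P (i+1)) - F (P i)) * Real.log ((F (P (i+1)) - F (P i)) / p i) ≤
      ∫ u in (0:ℝ)..1, f u * Real.log (f u) := by
    have hsplit : ∫ u in (0:ℝ)..1, f u * Real.log (f u)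
        = ∑ i ∈ Finset.range L, ∫ u in (P i)..(P (i+1)), f u * Real.log (f u) := by
      rw [intervalIntegral.sum_integral_adjacent_intervals (a := P) (n := L) ?_, hP0, hPL]
      intro k hk
      have hkL : k < L := hk
      have hlt : P k < P (k+1) := by
        have := hPstep k; have := hpos k (Finset.mem_range.2 hkL); linarith
      rw [intervalIntegrable_iff_integrableOn_Ioc_of_le hlt.le]
      exact hgI _ _ (hPIcc k hkL.le) (hPIcc (k+1) hkL) hlt.le
    rw [hsplit]
    refine Finset.sum_le_sum ?_
    intro i hi
    have hiL := Finset.mem_range.1 hi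
    have haIcc := hPIcc i hiL.le
    have hbIcc := hPIcc (i+1) hiL
    have hlt : P i < P (i+1) := by
      have := hPstep i; have := hpos i hi; linarith
    have hnn : ∀ x ∈ Set.Ioc (P i) (P (i+1)), 0 ≤ f x := by
      intro x hx
      exact hf0 x ⟨haIcc.1.trans hx.1.le, hx.2.trans hbIcc.2⟩
    have hfi : IntegrableOn f (Set.Ioc (P i) (P (i+1))) := by
      rw [← intervalIntegrable_iff_integrableOn_Ioc_of_le hlt.le]
      exact hfI _ _ haIcc hbIcc
    have := jensen_mul_log f (P i) (P (i+1)) hlt hnn hfi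
      (hgI _ _ haIcc hbIcc hlt.le)
    rw [hPstep i] at this
    rw [hai i hi]
    exact this
  -- Step C: algebra
  have hsuma : ∑ i ∈ Finset.range L, (F (P (i+1)) - F (P i)) = Z := by
    rw [Finset.sum_range_sub (fun i => F (P i)), hP0, hPL]
  have hterm : ∀ i ∈ Finset.range L,
      ((F (P (i+1)) - F (P i)) / Z) * Real.log ((F (P (i+1)) - F (P i)) / (p i * Z))
      = ((F (P (i+1)) - F (P i)) * Real.log ((F (P (i+1)) - F (P i)) / p i)
          - (F (P (i+1)) - F (P i)) * Real.log Z) / Z := by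
    intro i hi
    rcases eq_or_lt_of_le (hanon i hi) with h0 | h0
    · rw [← h0]; simp
    · have hpi := hpos i hi
      have h1 : (F (P (i+1)) - F (P i)) / (p i * Z) = ((F (P (i+1)) - F (P i)) / p i) / Z := by
        rw [div_div]
      rw [h1, Real.log_div (div_pos h0 hpi).ne' (ne_of_gt hFpos)]
      ring
  rw [Finset.sum_congr rfl hterm, ← Finset.sum_div, Finset.sum_sub_distrib,
    ← Finset.sum_mul, hsuma]
  have hZlog : (∑ i ∈ Finset.range L,
      (F (P (i+1)) - F (P i)) * Real.log ((F (P (i+1)) - F (P i)) / p i) - Z * Real.log Z) / Z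
      ≤ ((∫ u in (0:ℝ)..1, f u * Real.log (f u)) - Z * Real.log Z) / Z := by
    exact (div_le_div_iff_of_pos_right hFpos).2 (by linarith [key])
  refine hZlog.trans_eq ?_
  have h2 : Z * Real.log Z / Z = Real.log Z := by field_simp
  rw [sub_div, h2]
end

section
/- Let f : [0,1] → (0,∞) be differentiable and nondecreasing with derivative bounded by M on [0,1], F its integral with F(1) − F(0) > 0. With p_i, P_i as before, the KL gap satisfies: (∫₀¹ g(u) log g(u) du) − ∑_{i=1}^{L} (G(P_i)−G(P_{i−1})) log((G(P_i)−G(P_{i−1}))/p_i) ≤ (M/(F(1)−F(0))) ∑_{i=1}^{L} p_i², where g(u) = f(u)/(F(1)−F(0)) and G(u) = F(u)/(F(1)−F(0)). -/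
open intervalIntegral

/-- KL gap between the continuous and discrete cases is bounded by
`(M/(F(1)−F(0))) ∑ p_i²`, for `f` differentiable, positive, nondecreasing with
derivative bounded by `M` on `[0,1]`. Here `g = f/(F 1 − F 0)`, `G = F/(F 1 − F 0)`. -/
theorem kl_gap_bound (L : ℕ) (f f' : ℝ → ℝ) (M : ℝ)
    (hfpos : ∀ u ∈ Set.Icc (0:ℝ) 1, 0 < f u)
    (hmono : MonotoneOn f (Set.Icc (0:ℝ) 1))
    (hderiv : ∀ u ∈ Set.Icc (0:ℝ) 1, HasDerivAt f (f' u) u)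
    (hM : ∀ u ∈ Set.Icc (0:ℝ) 1, f' u ≤ M)
    (F : ℝ → ℝ) (hF : ∀ t, F t = ∫ u in (0:ℝ)..t, f u)
    (hFpos : 0 < F 1 - F 0)
    (p : ℕ → ℝ) (hpos : ∀ i ∈ Finset.range L, 0 < p i)
    (hsum : ∑ i ∈ Finset.range L, p i = 1)
    (P : ℕ → ℝ) (hP : ∀ i, P i = ∑ j ∈ Finset.range i, p j)
    (g G : ℝ → ℝ)
    (hg : ∀ u, g u = f u / (F 1 - F 0)) (hG : ∀ u, G u = F u / (F 1 - F 0)) :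
    (∫ u in (0:ℝ)..1, g u * Real.log (g u))
        - ∑ i ∈ Finset.range L,
            (G (P (i + 1)) - G (P i)) * Real.log ((G (P (i + 1)) - G (P i)) / p i) ≤
      (M / (F 1 - F 0)) * ∑ i ∈ Finset.range L, (p i) ^ 2 := by
  have hgdef : g = fun u => f u / (F 1 - F 0) := funext hg
  have hGdef : G = fun u => F u / (F 1 - F 0) := funext hG
  subst hgdef hGdef
  set c := F 1 - F 0 with hcdef
  have hfc : ContinuousOn f (Set.Icc (0:ℝ) 1) :=
    fun u hu => (hderiv u hu).continuousAt.continuousWithinAt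
  have hP0 : P 0 = 0 := by simp [hP]
  have hPL : P L = 1 := by rw [hP]; exact hsum
  have hPmono : ∀ ⦃i j : ℕ⦄, i ≤ j → j ≤ L → P i ≤ P j := by
    intro i j hij hjL
    rw [hP, hP]
    refine Finset.sum_le_sum_of_subset_of_nonneg (Finset.range_subset_range.2 hij) ?_
    intro k hk _
    exact (hpos k (Finset.mem_range.2 (lt_of_lt_of_le (Finset.mem_range.1 hk) hjL))).le
  have hPmem : ∀ i, i ≤ L → P i ∈ Set.Icc (0:ℝ) 1 := by
    intro i hi
    constructor
    · rw [← hP0]; exact hPmono (Nat.zero_le i) hi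
    · rw [← hPL]; exact hPmono hi le_rfl
  -- integrability of g * log g on each piece
  have hglogc : ∀ i < L, ContinuousOn (fun u => f u / c * Real.log (f u / c))
      (Set.Icc (P i) (P (i+1))) := by
    intro i hi
    have hsub : Set.Icc (P i) (P (i+1)) ⊆ Set.Icc (0:ℝ) 1 :=
      Set.Icc_subset_Icc (hPmem i hi.le).1 (hPmem (i+1) hi).2
    have h1 : ContinuousOn (fun u => f u / c) (Set.Icc (P i) (P (i+1))) :=
      (hfc.mono hsub).div_const c
    exact h1.mul (h1.log (fun x hx => ne_of_gt (div_pos (hfpos x (hsub hx)) hFpos)))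
  have hintL : ∀ i < L, IntervalIntegrable (fun u => f u / c * Real.log (f u / c))
      MeasureTheory.volume (P i) (P (i+1)) := by
    intro i hi
    refine (hglogc i hi).intervalIntegrable_of_Icc ?_
    rw [← hP0] at *
    exact hPmono (Nat.le_succ i) hi
  have key : ∀ i ∈ Finset.range L,
      (∫ u in P i..P (i+1), f u / c * Real.log (f u / c))
        - (F (P (i+1)) / c - F (P i) / c) *
            Real.log ((F (P (i+1)) / c - F (P i) / c) / p i) ≤ M / c * p i ^ 2 := by
    intro i hi
    have hiL : i < L := Finset.mem_range.1 hi
    set a := P i with ha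
    set b := P (i+1) with hb
    have hpi : 0 < p i := hpos i hi
    have hba : b - a = p i := by rw [ha, hb, hP, hP, Finset.sum_range_succ]; ring
    have hab : a < b := by linarith
    have hsub : Set.Icc a b ⊆ Set.Icc (0:ℝ) 1 :=
      Set.Icc_subset_Icc (hPmem i hiL.le).1 (hPmem (i+1) hiL).2
    have hamem : a ∈ Set.Icc (0:ℝ) 1 := hsub ⟨le_rfl, hab.le⟩
    have hbmem : b ∈ Set.Icc (0:ℝ) 1 := hsub ⟨hab.le, le_rfl⟩
    have hfa : 0 < f a := hfpos a hamem
    have hfb : 0 < f b := hfpos b hbmem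
    have hfab : ContinuousOn f (Set.Icc a b) := hfc.mono hsub
    have hintf : IntervalIntegrable f MeasureTheory.volume a b :=
      hfab.intervalIntegrable_of_Icc hab.le
    have hint0a : IntervalIntegrable f MeasureTheory.volume 0 a :=
      (hfc.mono (Set.Icc_subset_Icc le_rfl hamem.2)).intervalIntegrable_of_Icc hamem.1
    have hint0b : IntervalIntegrable f MeasureTheory.volume 0 b :=
      (hfc.mono (Set.Icc_subset_Icc le_rfl hbmem.2)).intervalIntegrable_of_Icc hbmem.1
    set D := ∫ u in a..b, f u with hD
    have hFab : F b - F a = D := by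
      rw [hF, hF, hD]
      exact integral_interval_sub_left hint0b hint0a
    have Dlow : (b - a) * f a ≤ D := by
      have h := intervalIntegral.integral_mono_on hab.le
        (_root_.intervalIntegrable_const (c := f a)) hintf
        (fun x hx => hmono hamem (hsub hx) hx.1)
      rwa [intervalIntegral.integral_const, smul_eq_mul] at h
    have Dhigh : D ≤ (b - a) * f b := by
      have h := intervalIntegral.integral_mono_on hab.le hintf
        (_root_.intervalIntegrable_const (c := f b))
        (fun x hx => hmono (hsub hx) hbmem hx.2)
      rwa [intervalIntegral.integral_const, smul_eq_mul] at h
    have hDpos : 0 < D := lt_of_lt_of_le (by nlinarith) Dlow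
    set A := D / p i with hA
    have hApos : 0 < A := div_pos hDpos hpi
    have hDA : D = A * p i := by rw [hA, div_mul_cancel₀ D hpi.ne']
    have hAfb : A ≤ f b := by
      rw [hA, div_le_iff₀ hpi]; nlinarith
    have hfaA : f a ≤ A := by
      rw [hA, le_div_iff₀ hpi]; nlinarith
    -- MVT
    have hMVT : f b - f a ≤ M * p i := by
      obtain ⟨ξ, hξ, hξeq⟩ := exists_hasDerivAt_eq_slope f f' hab hfab
        (fun x hx => hderiv x (hsub ⟨hx.1.le, hx.2.le⟩))
      have h1 : (f b - f a) / (b - a) ≤ M := by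
        rw [← hξeq]; exact hM ξ (hsub ⟨hξ.1.le, hξ.2.le⟩)
      rw [div_le_iff₀ (by linarith)] at h1
      nlinarith
    -- step 1: integral bound
    have step1 : (∫ u in a..b, f u / c * Real.log (f u / c))
        ≤ D / c * Real.log (f b / c) := by
      have hmonoint : (∫ u in a..b, f u / c * Real.log (f u / c))
          ≤ ∫ u in a..b, f u / c * Real.log (f b / c) := by
        refine intervalIntegral.integral_mono_on hab.le ?_ ?_ ?_
        · have := hglogc i hiL; rw [← ha, ← hb] at this
          exact this.intervalIntegrable_of_Icc hab.le
        · exact (hintf.div_const c).mul_const _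
        · intro x hx
          have hfx : 0 < f x := hfpos x (hsub hx)
          refine mul_le_mul_of_nonneg_left ?_ (by positivity)
          refine Real.log_le_log (by positivity) ?_
          gcongr
          exact hmono (hsub hx) hbmem hx.2
      have heq : (∫ u in a..b, f u / c * Real.log (f b / c))
          = D / c * Real.log (f b / c) := by
        rw [intervalIntegral.integral_mul_const, intervalIntegral.integral_div]
      linarith [heq ▸ hmonoint]
    -- step 2: log bound
    have step2 : Real.log (f b / c) - Real.log (A / c) ≤ (f b - A) / A := by
      rw [Real.log_div hfb.ne' hFpos.ne', Real.log_div hApos.ne' hFpos.ne']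
      have h1 : Real.log (f b / A) ≤ f b / A - 1 :=
        Real.log_le_sub_one_of_pos (div_pos hfb hApos)
      rw [Real.log_div hfb.ne' hApos.ne'] at h1
      have : f b / A - 1 = (f b - A) / A := by field_simp
      linarith [this ▸ h1]
    -- assemble
    have hterm : F b / c - F a / c = D / c := by rw [← hFab]; ring
    have hterm2 : (D / c) / p i = A / c := by
      rw [hA, div_div, div_div, mul_comm]
    rw [hterm, hterm2]
    have hDc : 0 < D / c := div_pos hDpos hFpos
    have chain : D / c * Real.log (f b / c) - D / c * Real.log (A / c)
        ≤ M / c * p i ^ 2 := by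
      have h1 : D / c * (Real.log (f b / c) - Real.log (A / c))
          ≤ D / c * ((f b - A) / A) := mul_le_mul_of_nonneg_left step2 hDc.le
      have h2 : D / c * ((f b - A) / A) = p i * (f b - A) / c := by
        rw [hDA]; field_simp
      have h5 : f b - A ≤ M * p i := by linarith
      have h3 : p i * (f b - A) / c ≤ p i * (M * p i) / c := by
        gcongr
      calc D / c * Real.log (f b / c) - D / c * Real.log (A / c)
          = D / c * (Real.log (f b / c) - Real.log (A / c)) := by ring
        _ ≤ D / c * ((f b - A) / A) := h1
        _ = p i * (f b - A) / c := h2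
        _ ≤ p i * (M * p i) / c := h3
        _ = M / c * p i ^ 2 := by ring
    linarith [step1]
  -- sum decomposition
  have hsplit : (∫ u in (0:ℝ)..1, f u / c * Real.log (f u / c))
      = ∑ i ∈ Finset.range L, ∫ u in P i..P (i+1), f u / c * Real.log (f u / c) := by
    rw [intervalIntegral.sum_integral_adjacent_intervals hintL, hP0, hPL]
  simp only []
  rw [hsplit, ← Finset.sum_sub_distrib, Finset.mul_sum]
  exact Finset.sum_le_sum key
end

section
/- For n ≥ 1 and c > 0 chosen so that ((c−1)e^c+1)/(c(e^c−1)) = n/(n+1) (equal win rates), the KL divergence of the exponential-tilted policy, ((c−1)e^c+1)/(e^c−1) − log((e^c−1)/c), is at most the KL divergence log n − (n−1)/n of the best-of-n policy... equivalently, at equal KL divergence d = log n − (n−1)/n, the optimal policy's win rate is at least n/(n+1). -/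
open Real

private lemma jlem (k : ℕ) :
    ∫ x in (0:ℝ)..1, x ^ k * (x * Real.log x) = -(1 / ((k : ℝ) + 2) ^ 2) := by
  have hk2 : ((k : ℝ) + 2) ≠ 0 := by positivity
  set F : ℝ → ℝ := fun x =>
    (x ^ (k + 2) * (((k : ℝ) + 2) * Real.log x) - x ^ (k + 2)) / ((k : ℝ) + 2) ^ 2 with hF
  have hFeq : F = fun x =>
      ((((k : ℝ) + 2) * (x ^ (k + 1) * (x * Real.log x))) - x ^ (k + 2)) / ((k : ℝ) + 2) ^ 2 := by
    funext x
    rw [hF]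
    rw [show k + 2 = (k + 1) + 1 from rfl, pow_succ]
    ring
  have hcont : ContinuousOn F (Set.Icc 0 1) := by
    rw [hFeq]
    exact (((continuous_const.mul ((continuous_pow (k+1)).mul Real.continuous_mul_log)).sub
      (continuous_pow (k+2))).div_const _).continuousOn
  have hderiv : ∀ x ∈ Set.Ioo (0:ℝ) 1, HasDerivAt F (x ^ k * (x * Real.log x)) x := by
    intro x hx
    have hx0 : x ≠ 0 := ne_of_gt hx.1
    have h1 : HasDerivAt (fun y : ℝ => y ^ (k + 2)) ((k + 2 : ℕ) * x ^ (k + 1)) x := by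
      simpa using hasDerivAt_pow (k + 2) x
    have h2 : HasDerivAt (fun y : ℝ => ((k : ℝ) + 2) * Real.log y) (((k : ℝ) + 2) * x⁻¹) x :=
      (Real.hasDerivAt_log hx0).const_mul _
    have h3 : HasDerivAt F _ x := ((h1.mul h2).sub h1).div_const (((k : ℝ) + 2) ^ 2)
    convert h3 using 1
    rw [show k + 2 = (k + 1) + 1 from rfl, pow_succ, show k + 1 = k + 1 from rfl]
    push_cast
    field_simp
    ring
  have hint : IntervalIntegrable (fun x : ℝ => x ^ k * (x * Real.log x)) MeasureTheory.volume 0 1 :=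
    ((continuous_pow k).mul Real.continuous_mul_log).intervalIntegrable _ _
  have := intervalIntegral.integral_eq_sub_of_hasDerivAt_of_le (by norm_num) hcont hderiv hint
  rw [this, hF]
  simp [Real.log_one]
  field_simp

private lemma elem (c : ℝ) (hc : c ≠ 0) :
    ∫ x in (0:ℝ)..1, Real.exp (c * x) = (Real.exp c - 1) / c := by
  have hderiv : ∀ x ∈ Set.uIcc (0:ℝ) 1,
      HasDerivAt (fun y : ℝ => Real.exp (c * y) / c) (Real.exp (c * x)) x := by
    intro x _
    have h1 : HasDerivAt (fun y : ℝ => c * y) c x := by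
      simpa using (hasDerivAt_id x).const_mul c
    have h2 : HasDerivAt (fun y : ℝ => Real.exp (c * y) / c) _ x := (h1.exp).div_const c
    convert h2 using 1
    field_simp
  have hint : IntervalIntegrable (fun x : ℝ => Real.exp (c * x)) MeasureTheory.volume 0 1 :=
    (Real.continuous_exp.comp (continuous_const.mul continuous_id)).intervalIntegrable _ _
  rw [intervalIntegral.integral_eq_sub_of_hasDerivAt hderiv hint]
  simp [Real.exp_zero, sub_div]

private lemma gibbs (n : ℕ) (hn : 1 ≤ n) (c : ℝ) (hc : 0 < c) :
    Real.log c - Real.log (Real.exp c - 1) + c * n / (n + 1) ≤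
      Real.log n - ((n : ℝ) - 1) / n := by
  have hE : (0:ℝ) < Real.exp c - 1 := by
    have : (1:ℝ) < Real.exp c := by
      rw [← Real.exp_zero]; exact Real.exp_lt_exp.mpr hc
    linarith
  set E : ℝ := Real.exp c - 1 with hEdef
  have hn0 : (0:ℝ) < n := by exact_mod_cast hn
  have hcast1 : ((n - 1 : ℕ) : ℝ) = (n : ℝ) - 1 := by
    push_cast [hn]; ring
  have hpowsub : ∀ u : ℝ, u ^ (n - 1) * u = u ^ n := by
    intro u; rw [← pow_succ, Nat.sub_add_cancel hn]
  set q : ℝ → ℝ := fun u => (n : ℝ) * u ^ (n - 1) with hq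
  set p : ℝ → ℝ := fun u => c * Real.exp (c * u) / E with hp
  set glq : ℝ → ℝ := fun u =>
    (n : ℝ) * Real.log n * u ^ (n - 1) +
      (n : ℝ) * ((n : ℝ) - 1) * (u ^ (n - 2) * (u * Real.log u)) with hglq
  set glp : ℝ → ℝ := fun u =>
    (Real.log c - Real.log E) * ((n : ℝ) * u ^ (n - 1)) + c * (n : ℝ) * u ^ n with hglp
  have hppos : ∀ u : ℝ, 0 < p u := by
    intro u; rw [hp]; positivity
  have hlogp : ∀ u : ℝ, Real.log (p u) = Real.log c - Real.log E + c * u := by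
    intro u
    rw [hp]
    rw [Real.log_div (by positivity) (ne_of_gt hE),
      Real.log_mul (ne_of_gt hc) (Real.exp_ne_zero _), Real.log_exp]
    ring
  -- pointwise Gibbs inequality
  have hpt : ∀ u ∈ Set.Icc (0:ℝ) 1, q u - p u ≤ q u * Real.log (q u) - q u * Real.log (p u) := by
    intro u hu
    have hu0 : (0:ℝ) ≤ u := hu.1
    have hqnn : 0 ≤ q u := by
      rw [hq]; dsimp only; positivity
    have hpu := hppos u
    rcases eq_or_lt_of_le hqnn with h | h
    · rw [← h]
      simp
      linarith
    · have hlog := Real.log_le_sub_one_of_pos (show 0 < p u / q u by positivity)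
      rw [Real.log_div (ne_of_gt hpu) (ne_of_gt h)] at hlog
      have h2 := mul_le_mul_of_nonneg_left hlog h.le
      have h3 : q u * (p u / q u) = p u := by field_simp
      rw [mul_sub, mul_sub, mul_one, h3] at h2
      linarith
  -- rewriting q * log q on the interval
  have hqq : ∀ u ∈ Set.Icc (0:ℝ) 1, q u * Real.log (q u) = glq u := by
    intro u hu
    rcases eq_or_lt_of_le hu.1 with h | h
    · subst h
      rcases Nat.lt_or_ge n 2 with h1 | h1
      · have : n = 1 := by omega
        subst this
        simp [hq, hglq]
      · have h2 : n - 1 ≠ 0 := by omega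
        rw [hq, hglq]
        simp [zero_pow h2]
    · rw [hq, hglq]
      dsimp only
      rw [Real.log_mul (by positivity) (by positivity),
        Real.log_pow, hcast1]
      rcases Nat.lt_or_ge n 2 with h1 | h1
      · have : n = 1 := by omega
        subst this
        norm_num
      · have h2 : u ^ (n - 1) = u ^ (n - 2) * u := by
          rw [← pow_succ]
          congr 1
          omega
        rw [h2]
        ring
  -- rewriting q * log p everywhere
  have hqp : ∀ u : ℝ, q u * Real.log (p u) = glp u := by
    intro u
    rw [hlogp, hq, hglp]
    dsimp only
    rw [← hpowsub u]
    ring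
  -- continuity / integrability
  have hcq : Continuous q := by
    rw [hq]; exact continuous_const.mul (continuous_pow _)
  have hcp : Continuous p := by
    rw [hp]
    exact (continuous_const.mul (Real.continuous_exp.comp (continuous_const.mul continuous_id))).div_const _
  have hcglq : Continuous glq := by
    rw [hglq]
    exact (continuous_const.mul (continuous_pow _)).add
      (continuous_const.mul ((continuous_pow _).mul Real.continuous_mul_log))
  have hcglp : Continuous glp := by
    rw [hglp]
    exact (continuous_const.mul (continuous_const.mul (continuous_pow _))).add
      (continuous_const.mul (continuous_pow _))
  -- integral values
  have hne : ((n - 1 : ℕ) : ℝ) + 1 = (n : ℝ) := by rw [hcast1]; ring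
  have Iq : ∫ u in (0:ℝ)..1, q u = 1 := by
    rw [hq]
    rw [intervalIntegral.integral_const_mul, integral_pow]
    rw [one_pow, zero_pow (by omega : n - 1 + 1 ≠ 0)]
    push_cast [hne]
    field_simp
    norm_num
  have Ip : ∫ u in (0:ℝ)..1, p u = 1 := by
    have : p = fun u => (c / E) * Real.exp (c * u) := by
      funext u; rw [hp]; ring
    rw [this, intervalIntegral.integral_const_mul, elem c (ne_of_gt hc)]
    rw [← hEdef]
    field_simp
  have Iglq : ∫ u in (0:ℝ)..1, glq u = Real.log n - ((n : ℝ) - 1) / n := by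
    rw [hglq]
    rw [intervalIntegral.integral_add (f := fun u => (n : ℝ) * Real.log n * u ^ (n - 1))
      (g := fun u => (n : ℝ) * ((n : ℝ) - 1) * (u ^ (n - 2) * (u * Real.log u)))
      ((continuous_const.mul (continuous_pow _)).intervalIntegrable _ _)
      ((continuous_const.mul ((continuous_pow _).mul Real.continuous_mul_log)).intervalIntegrable _ _)]
    rw [intervalIntegral.integral_const_mul, intervalIntegral.integral_const_mul,
      integral_pow, jlem (n - 2)]
    rw [one_pow, zero_pow (by omega : n - 1 + 1 ≠ 0)]
    rcases Nat.lt_or_ge n 2 with h1 | h1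
    · have : n = 1 := by omega
      subst this
      norm_num
    · have hc2 : ((n - 2 : ℕ) : ℝ) + 2 = (n : ℝ) := by
        push_cast [h1]
        ring
      rw [hc2]
      push_cast [hne]
      field_simp
      ring
  have Iglp : ∫ u in (0:ℝ)..1, glp u = Real.log c - Real.log E + c * n / (n + 1) := by
    rw [hglp]
    rw [intervalIntegral.integral_add (f := fun u => (Real.log c - Real.log E) * ((n : ℝ) * u ^ (n - 1)))
      (g := fun u => c * (n : ℝ) * u ^ n)
      ((continuous_const.mul (continuous_const.mul (continuous_pow _))).intervalIntegrable _ _)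
      ((continuous_const.mul (continuous_pow _)).intervalIntegrable _ _)]
    rw [intervalIntegral.integral_const_mul, intervalIntegral.integral_const_mul,
      intervalIntegral.integral_const_mul, integral_pow, integral_pow]
    rw [one_pow, zero_pow (by omega : n - 1 + 1 ≠ 0), one_pow, zero_pow (by omega : n + 1 ≠ 0)]
    push_cast [hne]
    have hn1 : (n : ℝ) + 1 ≠ 0 := by positivity
    field_simp
    norm_num
  -- monotonicity of integrals
  have hmono : (∫ u in (0:ℝ)..1, (q u - p u)) ≤ ∫ u in (0:ℝ)..1, (glq u - glp u) := by
    apply intervalIntegral.integral_mono_on (by norm_num)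
      ((hcq.sub hcp).intervalIntegrable _ _) ((hcglq.sub hcglp).intervalIntegrable _ _)
    intro u hu
    have := hpt u hu
    rw [hqq u hu, hqp u] at this
    exact this
  rw [intervalIntegral.integral_sub (hcq.intervalIntegrable _ _) (hcp.intervalIntegrable _ _),
    intervalIntegral.integral_sub (hcglq.intervalIntegrable _ _) (hcglp.intervalIntegrable _ _),
    Iq, Ip, Iglq, Iglp] at hmono
  linarith

/-- If `c > 0` is chosen so that the exponentially tilted policy has the same win rate
`n/(n+1)` as best-of-`n`, then its KL divergence from uniform is at most that of
best-of-`n`, namely `log n − (n−1)/n`. -/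
theorem optimal_kl_le_bon_kl (n : ℕ) (hn : 1 ≤ n) (c : ℝ) (hc : 0 < c)
    (hwr : ((c - 1) * Real.exp c + 1) / (c * (Real.exp c - 1)) = (n : ℝ) / (n + 1)) :
    ((c - 1) * Real.exp c + 1) / (Real.exp c - 1) - Real.log ((Real.exp c - 1) / c) ≤
      Real.log n - ((n : ℝ) - 1) / n := by
  have hE : (0:ℝ) < Real.exp c - 1 := by
    have : (1:ℝ) < Real.exp c := by
      rw [← Real.exp_zero]; exact Real.exp_lt_exp.mpr hc
    linarith
  have h1 : ((c - 1) * Real.exp c + 1) / (Real.exp c - 1) =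
      c * (((c - 1) * Real.exp c + 1) / (c * (Real.exp c - 1))) := by
    field_simp
  rw [h1, hwr, Real.log_div (ne_of_gt hE) (ne_of_gt hc)]
  have := gibbs n hn c hc
  have h2 : c * ((n : ℝ) / (n + 1)) = c * n / (n + 1) := by ring
  linarith
end

section
/- Among all probability densities q on [0,1] with KL divergence from the uniform distribution equal to d > 0, the density maximizing ∫₀¹ u q(u) du is q*(u) = c e^{cu}/(e^c − 1), where c > 0 is the unique solution of ((c−1)e^c+1)/(e^c−1) − log((e^c−1)/c) = d. -/
open intervalIntegral

private lemma gibbs_pt (a b : ℝ) (ha : 0 ≤ a) (hb : 0 < b) :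
    a - b ≤ a * Real.log a - a * Real.log b := by
  rcases eq_or_lt_of_le ha with h | h
  · simp [← h]; linarith
  · have h1 := Real.log_le_sub_one_of_pos (div_pos hb h)
    rw [Real.log_div hb.ne' h.ne'] at h1
    have h2 := mul_le_mul_of_nonneg_left h1 h.le
    have h3 : a * (b / a - 1) = b - a := by field_simp
    nlinarith [h2, h3]

private lemma exp_int (c : ℝ) (hc : 0 < c) :
    (∫ u in (0:ℝ)..1, Real.exp (c*u)) = (Real.exp c - 1)/c := by
  have : ∀ u ∈ Set.uIcc (0:ℝ) 1, HasDerivAt (fun x => Real.exp (c*x)/c) (Real.exp (c*u)) u := by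
    intro u _
    have h := ((Real.hasDerivAt_exp (c*u)).comp u ((hasDerivAt_id u).const_mul c)).div_const c
    simpa [mul_comm, mul_div_assoc, mul_div_cancel_left₀ _ hc.ne'] using h
  rw [integral_eq_sub_of_hasDerivAt this (by apply Continuous.intervalIntegrable; continuity)]
  simp [sub_div]

private lemma uexp_int (c : ℝ) (hc : 0 < c) :
    (∫ u in (0:ℝ)..1, u * (c * Real.exp (c*u))) = ((c-1) * Real.exp c + 1)/c := by
  have : ∀ u ∈ Set.uIcc (0:ℝ) 1, HasDerivAt (fun x => (x - 1/c) * Real.exp (c*x))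
      (u * (c * Real.exp (c*u))) u := by
    intro u _
    have he := (Real.hasDerivAt_exp (c*u)).comp u ((hasDerivAt_id u).const_mul c)
    have h := ((hasDerivAt_id u).sub_const (1/c)).mul he
    have h' : HasDerivAt (fun x => (x - 1/c) * Real.exp (c*x))
        (1 * Real.exp (c*u) + (u - 1/c) * (Real.exp (c*u) * (c*1))) u := h
    convert h' using 1
    have hc' : c ≠ 0 := hc.ne'
    field_simp
    ring
  rw [integral_eq_sub_of_hasDerivAt this (by apply Continuous.intervalIntegrable; continuity)]
  field_simp
  simp only [mul_zero, Real.exp_zero]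
  ring

/-- Among densities `q` on `[0,1]` with KL divergence from uniform equal to `d > 0`,
the exponential tilting `q*(u) = c e^{cu}/(e^c − 1)` — with `c > 0` solving
`((c−1)e^c+1)/(e^c−1) − log((e^c−1)/c) = d` — maximizes the mean `∫₀¹ u q(u) du`. -/
theorem exp_tilt_maximizes_mean (d : ℝ) (hd : 0 < d) (c : ℝ) (hc : 0 < c)
    (hceq : ((c - 1) * Real.exp c + 1) / (Real.exp c - 1)
      - Real.log ((Real.exp c - 1) / c) = d)
    (q : ℝ → ℝ) (hqmeas : Measurable q)
    (hq0 : ∀ u ∈ Set.Icc (0:ℝ) 1, 0 ≤ q u)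
    (hq1 : (∫ u in (0:ℝ)..1, q u) = 1)
    (hqkl : (∫ u in (0:ℝ)..1, q u * Real.log (q u)) = d) :
    (∫ u in (0:ℝ)..1, u * q u) ≤
      ∫ u in (0:ℝ)..1, u * (c * Real.exp (c * u) / (Real.exp c - 1)) := by
  set E := Real.exp c with hE
  have hE1 : 1 < E := Real.one_lt_exp_iff.mpr hc
  have hEpos : 0 < E - 1 := by linarith
  set A := Real.log (c / (E - 1)) with hA
  -- integrability of q
  have hqi : IntervalIntegrable q MeasureTheory.volume 0 1 := by
    by_contra h
    rw [intervalIntegral.integral_undef h] at hq1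
    norm_num at hq1
  -- integrability of q log q
  have hqli : IntervalIntegrable (fun u => q u * Real.log (q u)) MeasureTheory.volume 0 1 := by
    by_contra h
    rw [intervalIntegral.integral_undef h] at hqkl
    exact absurd hqkl.symm hd.ne'
  -- integrability of u * q u
  have huqi : IntervalIntegrable (fun u => u * q u) MeasureTheory.volume 0 1 := by
    rw [intervalIntegrable_iff_integrableOn_Ioc_of_le zero_le_one] at hqi ⊢
    refine MeasureTheory.Integrable.mono hqi ?_ ?_
    · exact ((measurable_id.mul hqmeas).aestronglyMeasurable).restrict
    · rw [MeasureTheory.ae_restrict_iff' measurableSet_Ioc]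
      filter_upwards with u hu
      have h0 := hq0 u ⟨hu.1.le, hu.2⟩
      rw [Real.norm_eq_abs, Real.norm_eq_abs, abs_mul, abs_of_nonneg h0,
        abs_of_nonneg hu.1.le]
      nlinarith [hu.2]
  have hqi' : IntervalIntegrable q MeasureTheory.volume 0 1 := by
    by_contra h
    rw [intervalIntegral.integral_undef h] at hq1
    norm_num at hq1
  -- q* is continuous
  have hqs_cont : Continuous (fun u : ℝ => c * Real.exp (c * u) / (E - 1)) := by continuity
  -- value of ∫ q*
  have hqs1 : (∫ u in (0:ℝ)..1, c * Real.exp (c * u) / (E - 1)) = 1 := by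
    have : (fun u : ℝ => c * Real.exp (c * u) / (E - 1))
        = fun u => (c / (E - 1)) * Real.exp (c * u) := by
      funext u; ring
    rw [this, intervalIntegral.integral_const_mul, exp_int c hc]
    field_simp
    rw [hE]
  -- pointwise Gibbs inequality on [0,1]
  have hpt : ∀ u ∈ Set.Icc (0:ℝ) 1,
      q u - c * Real.exp (c * u) / (E - 1) ≤
        q u * Real.log (q u) - (A * q u + c * (u * q u)) := by
    intro u hu
    have hqspos : 0 < c * Real.exp (c * u) / (E - 1) :=
      div_pos (mul_pos hc (Real.exp_pos _)) hEpos
    have hlog : Real.log (c * Real.exp (c * u) / (E - 1)) = A + c * u := by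
      rw [Real.log_div (mul_pos hc (Real.exp_pos _)).ne' hEpos.ne',
        Real.log_mul hc.ne' (Real.exp_pos _).ne', Real.log_exp, hA,
        Real.log_div hc.ne' hEpos.ne']
      ring
    have := gibbs_pt (q u) (c * Real.exp (c * u) / (E - 1)) (hq0 u hu) hqspos
    rw [hlog] at this
    nlinarith [this]
  -- integrate the pointwise inequality
  have hfint : IntervalIntegrable (fun u => q u - c * Real.exp (c * u) / (E - 1))
      MeasureTheory.volume 0 1 := hqi.sub (hqs_cont.intervalIntegrable 0 1)
  have hgint : IntervalIntegrable
      (fun u => q u * Real.log (q u) - (A * q u + c * (u * q u)))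
      MeasureTheory.volume 0 1 :=
    hqli.sub ((hqi.const_mul A).add (huqi.const_mul c))
  have hmono := intervalIntegral.integral_mono_on zero_le_one hfint hgint hpt
  rw [intervalIntegral.integral_sub hqi (hqs_cont.intervalIntegrable 0 1),
    intervalIntegral.integral_sub hqli ((hqi.const_mul A).add (huqi.const_mul c)),
    intervalIntegral.integral_add (hqi.const_mul A) (huqi.const_mul c),
    intervalIntegral.integral_const_mul, intervalIntegral.integral_const_mul,
    hq1, hqs1, hqkl] at hmono
  -- so : 1 - 1 ≤ d - (A * 1 + c * M), i.e. c * M ≤ d - A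
  set M := ∫ u in (0:ℝ)..1, u * q u with hM
  -- compute RHS
  have hrhs : (∫ u in (0:ℝ)..1, u * (c * Real.exp (c * u) / (E - 1)))
      = ((c - 1) * E + 1) / (c * (E - 1)) := by
    have h1 : (fun u : ℝ => u * (c * Real.exp (c * u) / (E - 1)))
        = fun u => (1 / (E - 1)) * (u * (c * Real.exp (c * u))) := by
      funext u; ring
    rw [h1, intervalIntegral.integral_const_mul, uexp_int c hc,
      div_mul_div_comm, one_mul, mul_comm (E-1) c]
  rw [hrhs]
  -- A = - log ((E-1)/c)
  have hAval : A = - Real.log ((E - 1) / c) := by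
    rw [hA, Real.log_div hc.ne' hEpos.ne', Real.log_div hEpos.ne' hc.ne']
    ring
  have hkey : c * M ≤ ((c - 1) * E + 1) / (E - 1) := by
    have : d - A = ((c - 1) * E + 1) / (E - 1) := by
      rw [hAval]; linarith [hceq]
    linarith [hmono]
  rw [le_div_iff₀ (by positivity : (0:ℝ) < c * (E - 1))]
  rw [le_div_iff₀ hEpos] at hkey
  nlinarith [hkey]
end
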